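/- For λ ∈ [0,1] and θ ∈ [0, π/2], the Gisin state ρ_G(λ,θ) is a product state — i.e. there exist 2×2 density matrices σ, τ with ρ_G(λ,θ) = σ ⊗ₖ τ — if and only if λ = 1 and (θ = 0 or θ = π/2). -/
import Mathlib


open Matrix Real
open scoped Kronecker ComplexOrder

def IsDensityMatrix {n : Type*} [Fintype n] [DecidableEq n] (ρ : Matrix n n ℂ) : Prop :=
  ρ.PosSemidef ∧ ρ.trace = 1

def pairToFin4 (p : Fin 2 × Fin 2) : Fin 4 := ⟨2 * p.1.val + p.2.val, by omega⟩

/-- The Gisin state `ρ_G(λ,θ)`, indexed by `Fin 2 × Fin 2` in the basis order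
`(0,0), (0,1), (1,0), (1,1)`. -/
noncomputable def gisinState (l t : ℝ) : Matrix (Fin 2 × Fin 2) (Fin 2 × Fin 2) ℂ :=
  fun p q =>
    !![(((1 - l) / 2 : ℝ) : ℂ), 0, 0, 0;
       0, ((l * Real.sin t ^ 2 : ℝ) : ℂ), ((l * Real.sin t * Real.cos t : ℝ) : ℂ), 0;
       0, ((l * Real.sin t * Real.cos t : ℝ) : ℂ), ((l * Real.cos t ^ 2 : ℝ) : ℂ), 0;
       0, 0, 0, (((1 - l) / 2 : ℝ) : ℂ)] (pairToFin4 p) (pairToFin4 q)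

lemma dm0 : IsDensityMatrix (!![0,0;0,1] : Matrix (Fin 2) (Fin 2) ℂ) := by
  have h : (!![0,0;0,1] : Matrix (Fin 2) (Fin 2) ℂ) = Matrix.diagonal ![0,1] := by
    ext i j; fin_cases i <;> fin_cases j <;> simp [Matrix.diagonal]
  constructor
  · rw [h]
    refine Matrix.posSemidef_diagonal_iff.mpr ?_
    intro i; fin_cases i <;> simp
  · simp [Matrix.trace_fin_two]

lemma dm1 : IsDensityMatrix (!![1,0;0,0] : Matrix (Fin 2) (Fin 2) ℂ) := by
  have h : (!![1,0;0,0] : Matrix (Fin 2) (Fin 2) ℂ) = Matrix.diagonal ![1,0] := by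
    ext i j; fin_cases i <;> fin_cases j <;> simp [Matrix.diagonal]
  constructor
  · rw [h]
    refine Matrix.posSemidef_diagonal_iff.mpr ?_
    intro i; fin_cases i <;> simp
  · simp [Matrix.trace_fin_two]

theorem gisin_product_iff (l t : ℝ) (hl : l ∈ Set.Icc (0 : ℝ) 1)
    (ht : t ∈ Set.Icc (0 : ℝ) (Real.pi / 2)) :
    (∃ σ τ : Matrix (Fin 2) (Fin 2) ℂ,
        IsDensityMatrix σ ∧ IsDensityMatrix τ ∧ gisinState l t = σ ⊗ₖ τ) ↔
      (l = 1 ∧ (t = 0 ∨ t = Real.pi / 2)) := by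
  constructor
  · rintro ⟨σ, τ, hσ, hτ, h⟩
    have trσ : σ 0 0 + σ 1 1 = 1 := by
      have := hσ.2; rwa [Matrix.trace_fin_two] at this
    -- entry equations
    have E1 : σ 0 0 * τ 0 0 = (((1-l)/2 : ℝ) : ℂ) := by
      have := congrFun (congrFun h ((0:Fin 2),(0:Fin 2))) ((0:Fin 2),(0:Fin 2))
      simpa [gisinState, pairToFin4] using this.symm
    have E2 : σ 0 0 * τ 1 1 = ((l * Real.sin t ^ 2 : ℝ) : ℂ) := by
      have := congrFun (congrFun h ((0:Fin 2),(1:Fin 2))) ((0:Fin 2),(1:Fin 2))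
      simpa [gisinState, pairToFin4] using this.symm
    have E3 : σ 1 1 * τ 0 0 = ((l * Real.cos t ^ 2 : ℝ) : ℂ) := by
      have := congrFun (congrFun h ((1:Fin 2),(0:Fin 2))) ((1:Fin 2),(0:Fin 2))
      simpa [gisinState, pairToFin4] using this.symm
    have E4 : σ 1 1 * τ 1 1 = (((1-l)/2 : ℝ) : ℂ) := by
      have := congrFun (congrFun h ((1:Fin 2),(1:Fin 2))) ((1:Fin 2),(1:Fin 2))
      simpa [gisinState, pairToFin4] using this.symm
    have F1 : σ 0 0 * τ 1 0 = 0 := by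
      have := congrFun (congrFun h ((0:Fin 2),(1:Fin 2))) ((0:Fin 2),(0:Fin 2))
      simpa [gisinState, pairToFin4] using this.symm
    have F2 : σ 1 1 * τ 1 0 = 0 := by
      have := congrFun (congrFun h ((1:Fin 2),(1:Fin 2))) ((1:Fin 2),(0:Fin 2))
      simpa [gisinState, pairToFin4] using this.symm
    have B : σ 0 1 * τ 1 0 = ((l * Real.sin t * Real.cos t : ℝ) : ℂ) := by
      have := congrFun (congrFun h ((0:Fin 2),(1:Fin 2))) ((1:Fin 2),(0:Fin 2))
      simpa [gisinState, pairToFin4] using this.symm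
    have hg : τ 1 0 = 0 := by
      have : (σ 0 0 + σ 1 1) * τ 1 0 = 0 := by rw [add_mul, F1, F2, add_zero]
      rwa [trσ, one_mul] at this
    have hlsc : l * Real.sin t * Real.cos t = 0 := by
      have : ((l * Real.sin t * Real.cos t : ℝ) : ℂ) = 0 := by rw [← B, hg, mul_zero]
      exact_mod_cast this
    -- helper: from a product = cast being zero derive l = 1, etc.
    have half_ne : ∀ x : ℝ, (((1-l)/2 : ℝ) : ℂ) = 0 → l = 1 := by
      intro _ hx
      have : (1-l)/2 = 0 := by exact_mod_cast hx
      linarith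
    rcases mul_eq_zero.mp hlsc with hls | hc
    · rcases mul_eq_zero.mp hls with hl0 | hs
      · -- l = 0 : contradiction
        exfalso
        have hs2 : σ 0 0 * τ 1 1 = 0 := by rw [E2, hl0]; norm_num
        rcases mul_eq_zero.mp hs2 with h0 | h0
        · have := E1; rw [h0, zero_mul] at this
          have : (1-l)/2 = 0 := by exact_mod_cast this.symm
          linarith
        · have := E4; rw [h0, mul_zero] at this
          have : (1-l)/2 = 0 := by exact_mod_cast this.symm
          linarith
      · -- sin t = 0 → t = 0, and l = 1
        have ht0 : t = 0 := by
          rcases Real.sin_eq_zero_iff_of_lt_of_lt (by linarith [ht.1, Real.pi_pos]) 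
            (by linarith [ht.2, Real.pi_pos]) |>.mp hs with h0
          exact h0
        have hl1 : l = 1 := by
          have hs2 : σ 0 0 * τ 1 1 = 0 := by rw [E2, hs]; norm_num
          rcases mul_eq_zero.mp hs2 with h0 | h0
          · have := E1; rw [h0, zero_mul] at this
            have : (1-l)/2 = 0 := by exact_mod_cast this.symm
            linarith
          · have := E4; rw [h0, mul_zero] at this
            have : (1-l)/2 = 0 := by exact_mod_cast this.symm
            linarith
        exact ⟨hl1, Or.inl ht0⟩
    · -- cos t = 0 → t = π/2, and l = 1
      have ht2 : t = Real.pi / 2 := by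
        have hs' : Real.sin (Real.pi/2 - t) = 0 := by
          rw [Real.sin_pi_div_two_sub]; exact hc
        have := Real.sin_eq_zero_iff_of_lt_of_lt (x := Real.pi/2 - t)
          (by linarith [ht.2, Real.pi_pos]) (by linarith [ht.1, Real.pi_pos]) |>.mp hs'
        linarith
      have hl1 : l = 1 := by
        have hs3 : σ 1 1 * τ 0 0 = 0 := by rw [E3, hc]; norm_num
        rcases mul_eq_zero.mp hs3 with h0 | h0
        · have := E4; rw [h0, zero_mul] at this
          have : (1-l)/2 = 0 := by exact_mod_cast this.symm
          linarith
        · have := E1; rw [h0, mul_zero] at this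
          have : (1-l)/2 = 0 := by exact_mod_cast this.symm
          linarith
      exact ⟨hl1, Or.inr ht2⟩
  · rintro ⟨rfl, rfl | rfl⟩
    · refine ⟨!![0,0;0,1], !![1,0;0,0], dm0, dm1, ?_⟩
      ext p q
      obtain ⟨i, j⟩ := p; obtain ⟨k, m⟩ := q
      fin_cases i <;> fin_cases j <;> fin_cases k <;> fin_cases m <;>
        simp [gisinState, pairToFin4, Matrix.vecHead, Matrix.vecTail]
    · refine ⟨!![1,0;0,0], !![0,0;0,1], dm1, dm0, ?_⟩
      ext p q
      obtain ⟨i, j⟩ := p; obtain ⟨k, m⟩ := q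
      fin_cases i <;> fin_cases j <;> fin_cases k <;> fin_cases m <;>
        simp [gisinState, pairToFin4, Matrix.vecHead, Matrix.vecTail]
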